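/- The poset ℙ₂ is countably closed: for every sequence f₀, f₁, f₂, … of elements of ℙ₂ such that f_{k+1} ⊇* f_k for every k (i.e. f_k ∖ f_{k+1} is finite), there exists f ∈ ℙ₂ such that f ⊇* f_k for every k. -/

import Mathlib

/-- A partial function from ℕ to ℕ is represented as `f : ℕ → Option ℕ`,
with `dom f = {n | f n ≠ none}`. `memP2 f` says `f ∈ ℙ₂`: `f` is an injective
partial function such that (1) `dom f = ran f`; (2) for all `i ∈ dom f` and all `n`,
`f i ∈ [2^n, 2^{n+1})` iff `i ∈ [2^n, 2^{n+1})`; (3) `limsup_n |[2^n,2^{n+1}) ∖ dom f| = ∞`;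
(4) for all `i ∈ dom f`, `f (f i) = i` and `f i ≠ i`. -/
def memP2 (f : ℕ → Option ℕ) : Prop :=
  (∀ i j k : ℕ, f i = some k → f j = some k → i = j) ∧
  (∀ j : ℕ, (∃ i, f i = some j) ↔ f j ≠ none) ∧
  (∀ i j n : ℕ, f i = some j →
    (j ∈ Set.Ico (2 ^ n) (2 ^ (n + 1)) ↔ i ∈ Set.Ico (2 ^ n) (2 ^ (n + 1)))) ∧
  (∀ m N : ℕ, ∃ n ≥ N, m ≤ ((Finset.Ico (2 ^ n) (2 ^ (n + 1))).filter
    (fun i => f i = none)).card) ∧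
  (∀ i j : ℕ, f i = some j → f j = some i ∧ j ≠ i)

/-!
Every condition defining ℙ₂ other than (3) only concerns one dyadic block `[2^n, 2^{n+1})` at a
time, so a function that agrees on each block with some member of ℙ₂ is again in ℙ₂ as soon as
it has arbitrarily many gaps in infinitely many blocks. Given the chain `F`, choose blocks
`u 0 < u 1 < ⋯` such that `F r` has at least `r` gaps in block `u r` and, from block `u r` on,
`F r` extends every `F j` with `j ≤ r`. Gluing `F r` onto the blocks from `u r` to `u (r+1) - 1`
gives a member of ℙ₂ that agrees with `F k` on `dom (F k)` beyond block `u k`.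
-/

open Filter

/-- `AlmostExtends g f` is `g ⊇* f`. -/
def AlmostExtends (g f : ℕ → Option ℕ) : Prop :=
  {n | f n ≠ none ∧ g n ≠ f n}.Finite

namespace AlmostExtends

variable {f g h : ℕ → Option ℕ}

theorem iff_eventually : AlmostExtends g f ↔ ∀ᶠ i in atTop, f i ≠ none → g i = f i := by
  simp only [AlmostExtends, ← Nat.cofinite_eq_atTop, eventually_cofinite, Classical.not_imp]

theorem refl (f : ℕ → Option ℕ) : AlmostExtends f f := by
  simp [AlmostExtends]

theorem trans (hgf : AlmostExtends g f) (hhg : AlmostExtends h g) : AlmostExtends h f := by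
  rw [iff_eventually] at *
  filter_upwards [hgf, hhg] with i hgi hhi hfi
  rw [hhi (hgi hfi ▸ hfi), hgi hfi]

theorem of_chain {F : ℕ → ℕ → Option ℕ} (hF : ∀ k, AlmostExtends (F (k + 1)) (F k))
    {j r : ℕ} (hjr : j ≤ r) : AlmostExtends (F r) (F j) := by
  induction r, hjr using Nat.le_induction with
  | base => exact refl _
  | succ r _ ih => exact ih.trans (hF r)

theorem eventually_forall_le {F : ℕ → ℕ → Option ℕ} (hF : ∀ k, AlmostExtends (F (k + 1)) (F k))
    (r : ℕ) : ∀ᶠ i in atTop, ∀ j ≤ r, F j i ≠ none → F r i = F j i :=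
  (Set.finite_Iic r).eventually_all.2 fun _ hj => iff_eventually.1 (of_chain hF hj)

end AlmostExtends

def blockGaps (f : ℕ → Option ℕ) (n : ℕ) : ℕ :=
  ((Finset.Ico (2 ^ n) (2 ^ (n + 1))).filter (fun i => f i = none)).card

theorem memP2.log_eq {f : ℕ → Option ℕ} (hf : memP2 f) {i j : ℕ} (hij : f i = some j) :
    Nat.log 2 j = Nat.log 2 i := by
  have mem_block {x : ℕ} (hx : x ≠ 0) : x ∈ Set.Ico (2 ^ Nat.log 2 x) (2 ^ (Nat.log 2 x + 1)) :=
    ⟨Nat.pow_log_le_self 2 hx, Nat.lt_pow_succ_log_self one_lt_two x⟩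
  have hji := (hf.2.2.2.2 i j hij).2
  rcases eq_or_ne i 0 with rfl | hi
  · have := ((hf.2.2.1 0 j (Nat.log 2 j) hij).1 (mem_block hji)).1
    have := Nat.two_pow_pos (Nat.log 2 j)
    omega
  · obtain ⟨hj₁, hj₂⟩ := (hf.2.2.1 i j (Nat.log 2 i) hij).2 (mem_block hi)
    exact Nat.log_eq_of_pow_le_of_lt_pow hj₁ hj₂

def glue (G : ℕ → ℕ → Option ℕ) (s : ℕ → ℕ) (i : ℕ) : Option ℕ :=
  G (s (Nat.log 2 i)) i

section glue

variable {G : ℕ → ℕ → Option ℕ} {s : ℕ → ℕ}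

theorem glue_eq_some (hG : ∀ k, memP2 (G k)) {i j : ℕ} (hij : glue G s i = some j) :
    Nat.log 2 j = Nat.log 2 i ∧ glue G s j = some i ∧ j ≠ i := by
  have hlog := (hG _).log_eq hij
  refine ⟨hlog, ?_, ((hG _).2.2.2.2 i j hij).2⟩
  rw [glue, hlog]
  exact ((hG _).2.2.2.2 i j hij).1

theorem blockGaps_glue (n : ℕ) : blockGaps (glue G s) n = blockGaps (G (s n)) n := by
  refine congrArg Finset.card (Finset.filter_congr fun i hi => ?_)
  rw [Finset.mem_Ico] at hi
  rw [glue, Nat.log_eq_of_pow_le_of_lt_pow hi.1 hi.2]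

theorem memP2_glue (hG : ∀ k, memP2 (G k)) (hgaps : ∀ m N, ∃ n ≥ N, m ≤ blockGaps (G (s n)) n) :
    memP2 (glue G s) := by
  refine ⟨fun i j k hik hjk => ?_, fun j => ⟨?_, fun hj => ?_⟩,
    fun i j n hij => (hG _).2.2.1 i j n hij, fun m N => ?_,
    fun i j hij => (glue_eq_some hG hij).2⟩
  · have hlog : Nat.log 2 i = Nat.log 2 j :=
      (glue_eq_some hG hik).1.symm.trans (glue_eq_some hG hjk).1
    rw [glue, hlog] at hik
    exact (hG _).1 i j k hik hjk
  · rintro ⟨i, hij⟩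
    simp [(glue_eq_some hG hij).2.1]
  · obtain ⟨i, hji⟩ := Option.ne_none_iff_exists'.1 hj
    exact ⟨i, (glue_eq_some hG hji).2.1⟩
  · show ∃ n ≥ N, m ≤ blockGaps (glue G s) n
    simpa only [blockGaps_glue] using hgaps m N

end glue

/-- `stage u n` is the largest `r` with `u r ≤ n`, and `0` if there is none. -/
def stage (u : ℕ → ℕ) (n : ℕ) : ℕ :=
  Nat.findGreatest (fun r => u r ≤ n) n

section stage

variable {u : ℕ → ℕ}

theorem le_stage (hu : StrictMono u) {r n : ℕ} (h : u r ≤ n) : r ≤ stage u n :=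
  Nat.le_findGreatest (hu.le_apply.trans h) h

theorem apply_stage_le (hu : StrictMono u) {r n : ℕ} (h : u r ≤ n) : u (stage u n) ≤ n :=
  Nat.findGreatest_spec (P := fun r => u r ≤ n) (hu.le_apply.trans h) h

theorem stage_apply (hu : StrictMono u) (r : ℕ) : stage u (u r) = r :=
  le_antisymm (hu.le_iff_le.1 (apply_stage_le hu le_rfl)) (le_stage hu le_rfl)

end stage

theorem glue_stage_eq {F : ℕ → ℕ → Option ℕ} {u : ℕ → ℕ} (hu : StrictMono u)
    (hagree : ∀ r, ∀ i ≥ u r, ∀ j ≤ r, F j i ≠ none → F r i = F j i)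
    {k i : ℕ} (hi : 2 ^ u k ≤ i) (hk : F k i ≠ none) : glue F (stage u) i = F k i := by
  have hki : u k ≤ Nat.log 2 i := Nat.le_log_of_pow_le one_lt_two hi
  exact hagree _ i ((apply_stage_le hu hki).trans (Nat.log_le_self 2 i)) k (le_stage hu hki) hk

/-- The poset ℙ₂ is countably closed: for every sequence `F 0, F 1, F 2, …` of elements
of ℙ₂ such that `F (k+1) ⊇* F k` for every `k` (i.e. `F k ∖ F (k+1)` is finite), there is
`f ∈ ℙ₂` with `f ⊇* F k` for every `k`. -/
theorem P2_countably_closed (F : ℕ → ℕ → Option ℕ)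
    (hF : ∀ k, memP2 (F k))
    (hchain : ∀ k, {n : ℕ | F k n ≠ none ∧ F (k + 1) n ≠ F k n}.Finite) :
    ∃ f : ℕ → Option ℕ, memP2 f ∧
      ∀ k, {n : ℕ | F k n ≠ none ∧ f n ≠ F k n}.Finite := by
  have hblocks (r : ℕ) : ∃ᶠ n in atTop,
      (∀ i ≥ n, ∀ j ≤ r, F j i ≠ none → F r i = F j i) ∧ r ≤ blockGaps (F r) n :=
    (eventually_forall_ge_atTop.2 (AlmostExtends.eventually_forall_le hchain r)).and_frequently
      (frequently_atTop.2 fun N => (hF r).2.2.2.1 r N)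
  obtain ⟨u, hu, hblock⟩ := extraction_forall_of_frequently hblocks
  refine ⟨glue F (stage u), memP2_glue hF fun m N => ?_, fun k => ?_⟩
  · refine ⟨u (max m N), (le_max_right m N).trans hu.le_apply, ?_⟩
    rw [stage_apply hu]
    exact (le_max_left m N).trans (hblock _).2
  · refine AlmostExtends.iff_eventually.2 ?_
    filter_upwards [eventually_ge_atTop (2 ^ u k)] with i hi
    exact glue_stage_eq hu (fun r => (hblock r).1) hi
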